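/- arXiv:1308.2644 — 2 statements merged into one kernel-verified Lean document; each statement's English description precedes it below -/
import Mathlib

section
/- For every natural number m ≥ 1 and every natural number k ≥ 1, ∫₀¹ (1 − (1−p)^{k+1})^m dp ≤ Γ(1 + 1/(k+1)) · m^{−1/(k+1)}. -/
/-!
Since `1 - x ≤ e^{-x}`, the integrand is at most `exp (-m (1 - p)^{k+1})`. After the substitution
`q = 1 - p`, extending the range of integration from `[0, 1]` to `(0, ∞)` gives the Gamma integral
`∫₀^∞ exp (-m q^{k+1}) dq = m^{-1/(k+1)} Γ(1 + 1/(k+1))`.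
-/

open Real MeasureTheory Set

lemma one_sub_pow_le_exp_neg_mul {x : ℝ} (hx : x ≤ 1) (m : ℕ) :
    (1 - x) ^ m ≤ exp (-(m * x)) :=
  calc (1 - x) ^ m ≤ exp (-x) ^ m := pow_le_pow_left₀ (by linarith) (one_sub_le_exp_neg x) m
    _ = exp (-(m * x)) := by rw [← exp_nat_mul, mul_neg]

lemma integral_one_sub_one_sub_pow_pow_le (m n : ℕ) :
    ∫ p in (0:ℝ)..1, (1 - (1 - p) ^ n) ^ m ≤ ∫ q in (0:ℝ)..1, exp (-m * q ^ n) := by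
  have hsubst : ∫ p in (0:ℝ)..1, exp (-m * (1 - p) ^ n) = ∫ q in (0:ℝ)..1, exp (-m * q ^ n) := by
    simpa using intervalIntegral.integral_comp_sub_left (fun q => exp (-m * q ^ n)) (1:ℝ)
      (a := 0) (b := 1)
  rw [← hsubst]
  refine intervalIntegral.integral_mono_on zero_le_one
    ((by fun_prop : Continuous _).intervalIntegrable _ _)
    ((by fun_prop : Continuous _).intervalIntegrable _ _) fun p hp => ?_
  have hpow : (1 - p) ^ n ≤ 1 := pow_le_one₀ (by linarith [hp.2]) (by linarith [hp.1])
  simpa only [neg_mul] using one_sub_pow_le_exp_neg_mul hpow m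

lemma integral_exp_neg_mul_rpow_le {p b : ℝ} (hp : 0 < p) (hb : 0 < b) :
    ∫ q in (0:ℝ)..1, exp (-b * q ^ p) ≤ b ^ (-1 / p) * Gamma (1 / p + 1) := by
  have hint : IntegrableOn (fun q => exp (-b * q ^ p)) (Ioi 0) := by
    simpa using integrableOn_rpow_mul_exp_neg_mul_rpow (s := 0) neg_one_lt_zero hp hb
  rw [← integral_exp_neg_mul_rpow hp hb, intervalIntegral.integral_of_le zero_le_one]
  exact setIntegral_mono_set hint (.of_forall fun q => (exp_pos _).le)
    Ioc_subset_Ioi_self.eventuallyLE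

theorem stmt8_general (m k : ℕ) (hm : 1 ≤ m) :
    ∫ p in (0:ℝ)..1, (1 - (1 - p) ^ (k + 1)) ^ m
      ≤ Real.Gamma (1 + 1 / (k + 1)) * (m : ℝ) ^ (-(1 : ℝ) / (k + 1)) := by
  have hK : (0:ℝ) < ((k + 1 : ℕ) : ℝ) := by positivity
  calc ∫ p in (0:ℝ)..1, (1 - (1 - p) ^ (k + 1)) ^ m
      ≤ ∫ q in (0:ℝ)..1, exp (-m * q ^ ((k + 1 : ℕ) : ℝ)) := by
        simpa only [rpow_natCast] using integral_one_sub_one_sub_pow_pow_le m (k + 1)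
    _ ≤ (m : ℝ) ^ (-1 / ((k + 1 : ℕ) : ℝ)) * Gamma (1 / ((k + 1 : ℕ) : ℝ) + 1) :=
        integral_exp_neg_mul_rpow_le hK (by exact_mod_cast hm)
    _ = Gamma (1 + 1 / (k + 1)) * (m : ℝ) ^ (-(1 : ℝ) / (k + 1)) := by
        push_cast
        rw [mul_comm, add_comm (1 : ℝ)]

/-- For `m, k ≥ 1`,
`∫₀¹ (1 − (1−p)^{k+1})^m dp ≤ Γ(1 + 1/(k+1)) · m^{−1/(k+1)}`. -/
theorem stmt8 (m k : ℕ) (hm : 1 ≤ m) (hk : 1 ≤ k) :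
    ∫ p in (0:ℝ)..1, (1 - (1 - p) ^ (k + 1)) ^ m
      ≤ Real.Gamma (1 + 1 / (k + 1)) * (m : ℝ) ^ (-(1 : ℝ) / (k + 1)) :=
  stmt8_general m k hm
end

section
/- The function f : ℕ → ℝ defined for k ≥ 1 by f(k) = Γ(1 + 1/(k+1)) · (k+1)^{1/(k+1)} attains its maximum over the positive integers at k = 2; i.e., for all integers k ≥ 1, Γ(1 + 1/(k+1)) · (k+1)^{1/(k+1)} ≤ Γ(4/3) · 3^{1/3}. -/
/-!
Put `s = 1 / (k + 1)` and `c = 1.284`, a rational separating the value at `k = 3` (≈ 1.2818)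
from the value at `k = 2` (≈ 1.2879). Since `log ∘ Γ` is convex and vanishes at `1`,
`Γ(1 + s) ≤ Γ(5/4) ^ (4 s)` for `s ≤ 1/4`, so for `k ≥ 3` the value is at most
`(Γ(5/4)^4 (k + 1)) ^ s`, and `Γ(5/4)^4 m ≤ c^m` for all `m ≥ 4` follows from the case `m = 4`
because `(m + 1) / m ≤ c`. For `k = 1` the value is `√(π / 2) < c`.
The two numerical facts `4 Γ(5/4)^4 ≤ c^4` and `c^3 ≤ 3 Γ(4/3)^3` come from Wendel's bounds
`N! N^x ≤ Γ(N + 1 + x) ≤ N! (N + 1)^x` (log-convexity again) at `N = 100`, which turn into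
inequalities between rationals once the `x`-th powers are cleared.
-/

open Real Finset

lemma Gamma_add_nat_eq_mul_prod {y : ℝ} (hy : 0 < y) (n : ℕ) :
    Gamma (y + n) = Gamma y * ∏ j ∈ range n, (y + j) := by
  induction n with
  | zero => simp
  | succ n ih =>
    rw [Nat.cast_succ, ← add_assoc, Gamma_add_one (by positivity), ih, prod_range_succ]
    ring

lemma log_Gamma_add_one {y : ℝ} (hy : 0 < y) :
    (log ∘ Gamma) (y + 1) = (log ∘ Gamma) y + log y := by
  simp only [Function.comp_apply]
  rw [Gamma_add_one hy.ne', log_mul hy.ne' (Gamma_pos_of_pos hy).ne', add_comm]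

lemma Gamma_nat_add_le {x : ℝ} (hx₀ : 0 < x) (hx₁ : x ≤ 1) {n : ℕ} (hn : n ≠ 0) :
    Gamma (n + x) ≤ Gamma n * (n : ℝ) ^ x := by
  have hn' : (0 : ℝ) < n := by positivity
  have h := BohrMollerup.f_add_nat_le convexOn_log_Gamma log_Gamma_add_one hn hx₀ hx₁
  simp only [Function.comp_apply] at h
  rwa [← log_rpow hn', ← log_mul (Gamma_pos_of_pos hn').ne' (by positivity),
    log_le_log_iff (Gamma_pos_of_pos (by positivity)) (by positivity)] at h

lemma Gamma_nat_mul_rpow_le {x : ℝ} (hx : 0 < x) {n : ℕ} (hn : 2 ≤ n) :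
    Gamma n * ((n : ℝ) - 1) ^ x ≤ Gamma (n + x) := by
  have hn' : (1 : ℝ) < n := by exact_mod_cast hn
  have h := BohrMollerup.f_add_nat_ge convexOn_log_Gamma log_Gamma_add_one hn hx
  simp only [Function.comp_apply] at h
  rwa [← log_rpow (by linarith), ← log_mul (Gamma_pos_of_pos (by linarith)).ne'
    (by positivity), log_le_log_iff (by positivity) (Gamma_pos_of_pos (by positivity))] at h

lemma Gamma_one_add_le_rpow {s t : ℝ} (hs : 0 < s) (hst : s ≤ t) :
    Gamma (1 + s) ≤ Gamma (1 + t) ^ (s / t) := by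
  have ht : 0 < t := hs.trans_le hst
  have hw : 0 ≤ 1 - s / t := by rw [sub_nonneg, div_le_one ht]; exact hst
  have h := convexOn_log_Gamma.2 (Set.mem_Ioi.2 one_pos)
    (Set.mem_Ioi.2 (by linarith : (0 : ℝ) < 1 + t)) hw (by positivity) (sub_add_cancel 1 (s / t))
  have e : (1 - s / t) * 1 + s / t * (1 + t) = 1 + s := by
    field_simp; ring
  simp only [smul_eq_mul, e, Function.comp_apply, Gamma_one, log_one, mul_zero, zero_add] at h
  rw [rpow_def_of_pos (Gamma_pos_of_pos (by linarith)), ← log_le_iff_le_exp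
    (Gamma_pos_of_pos (by linarith)), mul_comm]
  exact h

lemma mul_le_pow_of_mul_le_pow {a c : ℝ} (ha : 0 ≤ a) {m₀ : ℕ}
    (hbase : a * m₀ ≤ c ^ m₀) (hratio : (m₀ : ℝ) + 1 ≤ c * m₀) {m : ℕ} (hm : m₀ ≤ m) :
    a * m ≤ c ^ m := by
  induction m, hm using Nat.le_induction with
  | base => exact hbase
  | succ m hm ih =>
    have hm₀ : (0 : ℝ) ≤ m₀ := m₀.cast_nonneg
    have hmm : (m₀ : ℝ) ≤ m := by exact_mod_cast hm
    have hc : 1 ≤ c := by nlinarith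
    have hstep : (m : ℝ) + 1 ≤ c * m := by
      nlinarith [mul_nonneg (sub_nonneg.2 hc) (sub_nonneg.2 hmm)]
    push_cast
    calc a * (m + 1) ≤ a * (c * m) := mul_le_mul_of_nonneg_left hstep ha
      _ = c * (a * m) := by ring
      _ ≤ c * c ^ m := mul_le_mul_of_nonneg_left ih (by linarith)
      _ = c ^ (m + 1) := by ring

lemma Gamma_one_add_mul_prod_le {x : ℝ} (hx₀ : 0 < x) (hx₁ : x ≤ 1) (N : ℕ) :
    Gamma (1 + x) * ∏ j ∈ range N, (1 + x + j) ≤ N.factorial * ((N : ℝ) + 1) ^ x := by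
  rw [← Gamma_add_nat_eq_mul_prod (by positivity), ← Gamma_nat_eq_factorial,
    show 1 + x + (N : ℝ) = (N + 1 : ℕ) + x by push_cast; ring]
  exact_mod_cast Gamma_nat_add_le hx₀ hx₁ N.succ_ne_zero

lemma factorial_mul_rpow_le_Gamma_one_add_mul_prod {x : ℝ} (hx : 0 < x) {N : ℕ} (hN : N ≠ 0) :
    N.factorial * (N : ℝ) ^ x ≤ Gamma (1 + x) * ∏ j ∈ range N, (1 + x + j) := by
  rw [← Gamma_add_nat_eq_mul_prod (by positivity), ← Gamma_nat_eq_factorial,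
    show 1 + x + (N : ℝ) = (N + 1 : ℕ) + x by push_cast; ring]
  simpa using Gamma_nat_mul_rpow_le hx (by omega : 2 ≤ N + 1)

lemma four_mul_Gamma_five_fourths_pow_four_le : 4 * Gamma (5 / 4) ^ 4 ≤ (1.284 : ℝ) ^ 4 := by
  have h := Gamma_one_add_mul_prod_le (x := 1 / 4) (by norm_num) (by norm_num) 100
  have hP : 0 < ∏ j ∈ range 100, (1 + 1 / 4 + (j : ℝ)) := prod_pos fun j _ => by positivity
  have h4 := pow_le_pow_left₀ (by positivity) h 4
  have hr : (((100 : ℕ) + 1 : ℝ) ^ ((1 : ℝ) / 4)) ^ 4 = (100 : ℕ) + 1 := by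
    rw [← rpow_natCast, ← rpow_mul (by positivity)]; norm_num
  rw [mul_pow, mul_pow, hr] at h4
  have hnum : 4 * ((100 : ℕ).factorial : ℝ) ^ 4 * ((100 : ℕ) + 1)
      ≤ (1.284 : ℝ) ^ 4 * (∏ j ∈ range 100, (1 + 1 / 4 + (j : ℝ))) ^ 4 := by
    norm_num [prod_range_succ, Nat.factorial]
  rw [show (5 / 4 : ℝ) = 1 + 1 / 4 by norm_num]
  nlinarith [pow_pos hP 4]

lemma le_Gamma_four_thirds_mul_rpow : (1.284 : ℝ) ≤ Gamma (4 / 3) * 3 ^ ((1 : ℝ) / 3) := by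
  have h := factorial_mul_rpow_le_Gamma_one_add_mul_prod (x := 1 / 3) (by norm_num)
    (by norm_num : 100 ≠ 0)
  have hP : 0 < ∏ j ∈ range 100, (1 + 1 / 3 + (j : ℝ)) := prod_pos fun j _ => by positivity
  have h3 := pow_le_pow_left₀ (by positivity) h 3
  have hr : ∀ a : ℝ, 0 ≤ a → (a ^ ((1 : ℝ) / 3)) ^ 3 = a := fun a ha => by
    rw [← rpow_natCast, ← rpow_mul ha]; norm_num
  rw [mul_pow, mul_pow, hr _ (by positivity)] at h3
  have hnum : (1.284 : ℝ) ^ 3 * (∏ j ∈ range 100, (1 + 1 / 3 + (j : ℝ))) ^ 3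
      ≤ 3 * ((100 : ℕ).factorial : ℝ) ^ 3 * (100 : ℕ) := by
    norm_num [prod_range_succ, Nat.factorial]
  rw [← pow_le_pow_iff_left₀ (by norm_num) (by positivity) three_ne_zero, mul_pow,
    hr _ (by norm_num), show (4 / 3 : ℝ) = 1 + 1 / 3 by norm_num]
  nlinarith [pow_pos hP 3]

lemma Gamma_three_halves_mul_rpow_le : Gamma (3 / 2) * 2 ^ ((1 : ℝ) / 2) ≤ (1.284 : ℝ) := by
  have hsq : (1 / 2 * √π * √2) ^ 2 = π / 2 := by
    rw [mul_pow, mul_pow, sq_sqrt pi_pos.le, sq_sqrt zero_le_two]; ring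
  rw [show (3 / 2 : ℝ) = 1 / 2 + 1 by norm_num, Gamma_add_one (by norm_num), Gamma_one_half_eq,
    ← sqrt_eq_rpow, ← pow_le_pow_iff_left₀ (by positivity) (by norm_num) two_ne_zero, hsq]
  linarith [pi_lt_d2]

lemma Gamma_one_add_inv_mul_rpow_le {n : ℕ} (hn : 4 ≤ n) :
    Gamma (1 + 1 / n) * (n : ℝ) ^ ((1 : ℝ) / n) ≤ (1.284 : ℝ) := by
  have hn₀ : (0 : ℝ) < n := by positivity
  have hG : Gamma (1 + 1 / n) ≤ (Gamma (5 / 4) ^ 4) ^ ((1 : ℝ) / n) := by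
    have h := Gamma_one_add_le_rpow (s := 1 / n) (t := 1 / 4) (by positivity)
      (by gcongr; exact_mod_cast hn)
    rwa [show (1 : ℝ) / n / (1 / 4) = (4 : ℕ) * (1 / n) by push_cast; ring,
      rpow_mul (Gamma_pos_of_pos (by norm_num)).le, rpow_natCast,
      show (1 : ℝ) + 1 / 4 = 5 / 4 by norm_num] at h
  have hpow := mul_le_pow_of_mul_le_pow (a := Gamma (5 / 4) ^ 4) (c := 1.284) (by positivity)
    (by simpa [mul_comm] using four_mul_Gamma_five_fourths_pow_four_le)
    (by norm_num) hn
  calc Gamma (1 + 1 / n) * (n : ℝ) ^ ((1 : ℝ) / n)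
      ≤ (Gamma (5 / 4) ^ 4) ^ ((1 : ℝ) / n) * (n : ℝ) ^ ((1 : ℝ) / n) := by gcongr
    _ = (Gamma (5 / 4) ^ 4 * n) ^ ((1 : ℝ) / n) := (mul_rpow (by positivity) hn₀.le).symm
    _ ≤ ((1.284 : ℝ) ^ n) ^ ((1 : ℝ) / n) := by gcongr
    _ = 1.284 := by
      rw [← rpow_natCast, ← rpow_mul (by norm_num), mul_one_div_cancel hn₀.ne', rpow_one]

/-- The function `k ↦ Γ(1 + 1/(k+1)) (k+1)^{1/(k+1)}` on the positive
integers attains its maximum at `k = 2`: for all integers `k ≥ 1`,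
`Γ(1 + 1/(k+1)) (k+1)^{1/(k+1)} ≤ Γ(4/3) · 3^{1/3}`. -/
theorem stmt9 (k : ℕ) (hk : 1 ≤ k) :
    Real.Gamma (1 + 1 / (k + 1)) * ((k : ℝ) + 1) ^ ((1 : ℝ) / (k + 1))
      ≤ Real.Gamma (4 / 3) * (3 : ℝ) ^ ((1 : ℝ) / 3) := by
  obtain rfl | rfl | hk₃ : k = 1 ∨ k = 2 ∨ 3 ≤ k := by omega
  · norm_num
    exact Gamma_three_halves_mul_rpow_le.trans le_Gamma_four_thirds_mul_rpow
  · norm_num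
  · have h := Gamma_one_add_inv_mul_rpow_le (n := k + 1) (by omega)
    push_cast at h
    exact h.trans le_Gamma_four_thirds_mul_rpow
end
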